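/- arXiv:2506.20218 — 4 statements merged into one kernel-verified Lean document; each statement's English description precedes it below -/
import Mathlib

section
/- Let m ≥ 1 be an integer and let q satisfy 1/2 < q < 1. Let Y1 ~ Binomial(m, q), Y2 = m − Y1, and M = max(Y1, Y2). Then for all integers i, i' with ⌈m/2⌉ ≤ i' ≤ i ≤ m: Pr(Y1 > Y2 | M = i) − Pr(Y2 > Y1 | M = i) ≥ Pr(Y1 > Y2 | M = i') − Pr(Y2 > Y1 | M = i'). -/
/-!
Given `M = i` with `m < 2i`, `Y₁` is either `i` or `m - i`, and the two binomial weights share the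
factor `C(m, i) (q (1 - q))^(m - i)`. Hence the conditional bias is
`(q^k - (1 - q)^k) / (q^k + (1 - q)^k)` with `k = 2i - m`; this also holds for `m = 2i`, where
both sides vanish. As `1 - q ≤ q`, this expression increases with `k`.
-/

open scoped BigOperators

noncomputable section

/-- `binomPr m q S` is the probability that a `Binomial(m, q)` random variable
takes a value in the set `S`. -/
def binomPr (m : ℕ) (q : ℝ) (S : Set ℕ) : ℝ :=
  ∑ i ∈ Finset.range (m + 1),
    S.indicator (fun i => (m.choose i : ℝ) * q ^ i * (1 - q) ^ (m - i)) i

theorem binomPr_eq_sum {m : ℕ} {q : ℝ} {S : Set ℕ} {s : Finset ℕ}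
    (hs : ∀ y ∈ s, y ≤ m) (hS : ∀ y ≤ m, y ∈ S ↔ y ∈ s) :
    binomPr m q S = ∑ y ∈ s, (m.choose y : ℝ) * q ^ y * (1 - q) ^ (m - y) := by
  have hsub : s ⊆ Finset.range (m + 1) := fun y hy => Finset.mem_range_succ_iff.2 (hs y hy)
  rw [binomPr, ← Finset.sum_subset hsub fun y hy hys =>
    Set.indicator_of_notMem (mt (hS y (Finset.mem_range_succ_iff.1 hy)).1 hys) _]
  exact Finset.sum_congr rfl fun y hy => Set.indicator_of_mem ((hS y (hs y hy)).2 hy) _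

theorem pow_mul_pow_le_pow_mul_pow {p q : ℝ} (hp : 0 ≤ p) (hpq : p ≤ q) {k l : ℕ}
    (hkl : k ≤ l) : q ^ k * p ^ l ≤ q ^ l * p ^ k := by
  obtain ⟨d, rfl⟩ := Nat.exists_eq_add_of_le hkl
  have hq : 0 ≤ q := hp.trans hpq
  calc q ^ k * p ^ (k + d) = q ^ k * p ^ k * p ^ d := by ring
    _ ≤ q ^ k * p ^ k * q ^ d := by gcongr
    _ = q ^ (k + d) * p ^ k := by ring

theorem monotone_pow_sub_pow_div_pow_add_pow {p q : ℝ} (hp : 0 ≤ p) (hpq : p ≤ q) (hq : 0 < q) :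
    Monotone fun k : ℕ => (q ^ k - p ^ k) / (q ^ k + p ^ k) := by
  intro k l hkl
  rw [div_le_div_iff₀ (by positivity) (by positivity)]
  linarith [pow_mul_pow_le_pow_mul_pow hp hpq hkl]

/-- `Pr(Y₁ > Y₂ | M = i) - Pr(Y₂ > Y₁ | M = i)`, where `y` is the value of `Y₁`. -/
def conditionalBias (m : ℕ) (q : ℝ) (i : ℕ) : ℝ :=
  binomPr m q ({y | m - y < y} ∩ {y | max y (m - y) = i}) /
      binomPr m q {y | max y (m - y) = i} -
    binomPr m q ({y | y < m - y} ∩ {y | max y (m - y) = i}) /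
      binomPr m q {y | max y (m - y) = i}

section Events

variable {m i : ℕ} {q : ℝ}

theorem binomPr_gt_inter_max_eq (hi : m < 2 * i) (him : i ≤ m) :
    binomPr m q ({y | m - y < y} ∩ {y | max y (m - y) = i}) =
      m.choose i * q ^ i * (1 - q) ^ (m - i) := by
  rw [binomPr_eq_sum (s := {i}) (by simpa) (by intro y _; simp; omega), Finset.sum_singleton]

theorem binomPr_lt_inter_max_eq (hi : m < 2 * i) (him : i ≤ m) :
    binomPr m q ({y | y < m - y} ∩ {y | max y (m - y) = i}) =
      m.choose i * q ^ (m - i) * (1 - q) ^ i := by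
  rw [binomPr_eq_sum (s := {m - i}) (by simp) (by intro y _; simp; omega), Finset.sum_singleton,
    Nat.choose_symm him, Nat.sub_sub_self him]

theorem binomPr_max_eq (hi : m < 2 * i) (him : i ≤ m) :
    binomPr m q {y | max y (m - y) = i} =
      m.choose i * q ^ i * (1 - q) ^ (m - i) + m.choose i * q ^ (m - i) * (1 - q) ^ i := by
  rw [binomPr_eq_sum (s := {i, m - i}) (by simp; omega) (by intro y _; simp; omega),
    Finset.sum_pair (by omega), Nat.choose_symm him, Nat.sub_sub_self him]

theorem binomPr_gt_inter_max_eq_of_two_mul_eq (hi : m = 2 * i) :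
    binomPr m q ({y | m - y < y} ∩ {y | max y (m - y) = i}) = 0 := by
  rw [binomPr_eq_sum (s := ∅) (by simp) (by intro y _; simp; omega), Finset.sum_empty]

theorem binomPr_lt_inter_max_eq_of_two_mul_eq (hi : m = 2 * i) :
    binomPr m q ({y | y < m - y} ∩ {y | max y (m - y) = i}) = 0 := by
  rw [binomPr_eq_sum (s := ∅) (by simp) (by intro y _; simp; omega), Finset.sum_empty]

end Events

theorem conditionalBias_eq {m i : ℕ} {q : ℝ} (hq0 : 0 < q) (hq1 : q < 1) (hi : m ≤ 2 * i)
    (him : i ≤ m) :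
    conditionalBias m q i =
      (q ^ (2 * i - m) - (1 - q) ^ (2 * i - m)) / (q ^ (2 * i - m) + (1 - q) ^ (2 * i - m)) := by
  rcases hi.eq_or_lt with hi | hi
  · rw [conditionalBias, binomPr_gt_inter_max_eq_of_two_mul_eq hi,
      binomPr_lt_inter_max_eq_of_two_mul_eq hi, hi, Nat.sub_self]
    simp
  rw [conditionalBias, binomPr_gt_inter_max_eq hi him, binomPr_lt_inter_max_eq hi him,
    binomPr_max_eq hi him, div_sub_div_same]
  have hc : 0 < (m.choose i : ℝ) * q ^ (m - i) * (1 - q) ^ (m - i) := by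
    have := Nat.choose_pos him
    have : 0 < 1 - q := by linarith
    positivity
  have hsplit : i = (m - i) + (2 * i - m) := by omega
  rw [show q ^ i = q ^ (m - i) * q ^ (2 * i - m) by rw [← pow_add, ← hsplit],
    show (1 - q) ^ i = (1 - q) ^ (m - i) * (1 - q) ^ (2 * i - m) by rw [← pow_add, ← hsplit]]
  conv_rhs => rw [← mul_div_mul_left _ _ hc.ne']
  congr 1 <;> ring

theorem conditional_bias_monotone_eq_general
    (m : ℕ) (q : ℝ) (hq : 1 / 2 < q) (hq1 : q < 1)
    (i i' : ℕ) (hi' : m ≤ 2 * i') (hii : i' ≤ i) (him : i ≤ m) :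
    binomPr m q ({y | m - y < y} ∩ {y | max y (m - y) = i'}) /
          binomPr m q {y | max y (m - y) = i'} -
        binomPr m q ({y | y < m - y} ∩ {y | max y (m - y) = i'}) /
          binomPr m q {y | max y (m - y) = i'} ≤
      binomPr m q ({y | m - y < y} ∩ {y | max y (m - y) = i}) /
          binomPr m q {y | max y (m - y) = i} -
        binomPr m q ({y | y < m - y} ∩ {y | max y (m - y) = i}) /
          binomPr m q {y | max y (m - y) = i} := by
  change conditionalBias m q i' ≤ conditionalBias m q i
  rw [conditionalBias_eq (by linarith) hq1 hi' (hii.trans him),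
    conditionalBias_eq (by linarith) hq1 (hi'.trans (by omega)) him]
  exact monotone_pow_sub_pow_div_pow_add_pow (by linarith) (by linarith) (by linarith) (by omega)

/-- monotonicity of the conditional bias given `M = i`, where
`Y1 ~ Binomial(m, q)`, `Y2 = m - Y1`, `M = max(Y1, Y2)`, and
`⌈m/2⌉ ≤ i' ≤ i ≤ m` (note `⌈m/2⌉ ≤ i'` iff `m ≤ 2 * i'`). -/
theorem conditional_bias_monotone_eq
    (m : ℕ) (hm : 1 ≤ m) (q : ℝ) (hq : 1 / 2 < q) (hq1 : q < 1)
    (i i' : ℕ) (hi' : m ≤ 2 * i') (hii : i' ≤ i) (him : i ≤ m) :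
    binomPr m q ({y | m - y < y} ∩ {y | max y (m - y) = i'}) /
          binomPr m q {y | max y (m - y) = i'} -
        binomPr m q ({y | y < m - y} ∩ {y | max y (m - y) = i'}) /
          binomPr m q {y | max y (m - y) = i'} ≤
      binomPr m q ({y | m - y < y} ∩ {y | max y (m - y) = i}) /
          binomPr m q {y | max y (m - y) = i} -
        binomPr m q ({y | y < m - y} ∩ {y | max y (m - y) = i}) /
          binomPr m q {y | max y (m - y) = i} :=
  conditional_bias_monotone_eq_general m q hq hq1 i i' hi' hii him
end
end

section
/- Let m ≥ 1 be an integer and let q satisfy 1/2 < q < 1. Let Y1 ~ Binomial(m, q), Y2 = m − Y1, and M = max(Y1, Y2). Then for all integers i, i' with m/2 ≤ i' ≤ i ≤ m: Pr(Y1 > Y2 | M ≥ i) − Pr(Y2 > Y1 | M ≥ i) ≥ Pr(Y1 > Y2 | M ≥ i') − Pr(Y2 > Y1 | M ≥ i'). -/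
open scoped BigOperators

noncomputable section

/-!
Write `P_q` for the law of `Y₁` and `W_j = {Y₁ > Y₂, M ≥ j}`. The event `{Y₂ > Y₁, M ≥ j}` is the
image of `W_j` under `y ↦ m - y`, so its `P_q`-probability is `P_{1-q}(W_j)`. For `j > m / 2` the
bias given `M ≥ j` is therefore `(P_q(W_j) - P_{1-q}(W_j)) / (P_q(W_j) + P_{1-q}(W_j))`, while at
`j = m / 2` the tie `Y₁ = Y₂` only enlarges the denominator. This expression increases with the
ratio `P_q(W_j) / P_{1-q}(W_j)`, which grows with `j` because the likelihood ratio
`P_q(y) / P_{1-q}(y) = (q / (1 - q)) ^ (2y - m)` is nondecreasing in `y`: raising `j` removes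
the points of `W_j` where it is smallest.
-/

open Finset

def binomPmf (m : ℕ) (q : ℝ) (y : ℕ) : ℝ := (m.choose y : ℝ) * q ^ y * (1 - q) ^ (m - y)

/-- The event `{Y₁ > Y₂, M ≥ j}`, i.e. `{Y₁ > m / 2, Y₁ ≥ j}`. -/
def majorityTail (m j : ℕ) : Set ℕ := {y | m < 2 * y ∧ j ≤ y}

theorem pow_mul_pow_le_pow_mul_pow_s3 {R : Type*} [CommSemiring R] [PartialOrder R]
    [IsOrderedRing R] {s t : R} (hs : 0 ≤ s) (hst : s ≤ t) {a b : ℕ} (hab : a ≤ b) :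
    t ^ a * s ^ b ≤ t ^ b * s ^ a := by
  obtain ⟨c, rfl⟩ := Nat.exists_eq_add_of_le hab
  have ht : 0 ≤ t := hs.trans hst
  calc t ^ a * s ^ (a + c) = t ^ a * s ^ a * s ^ c := by ring
    _ ≤ t ^ a * s ^ a * t ^ c := by gcongr
    _ = t ^ (a + c) * s ^ a := by ring

section binomPmf

variable {m : ℕ} {q : ℝ}

theorem binomPmf_nonneg (hq0 : 0 ≤ q) (hq1 : q ≤ 1) (y : ℕ) : 0 ≤ binomPmf m q y := by
  have : 0 ≤ 1 - q := by linarith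
  unfold binomPmf
  positivity

theorem binomPmf_self (m : ℕ) (q : ℝ) : binomPmf m q m = q ^ m := by
  simp [binomPmf]

theorem binomPmf_one_sub {y : ℕ} (hy : y ≤ m) :
    binomPmf m (1 - q) y = binomPmf m q (m - y) := by
  rw [binomPmf, binomPmf, Nat.choose_symm hy, Nat.sub_sub_self hy, sub_sub_cancel]
  ring

theorem binomPmf_one_sub_le (hq : 1 / 2 ≤ q) (hq1 : q ≤ 1) {y : ℕ} (hy : y ≤ m)
    (hmy : m ≤ 2 * y) : binomPmf m (1 - q) y ≤ binomPmf m q y := by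
  have key := pow_mul_pow_le_pow_mul_pow_s3 (t := q) (sub_nonneg.2 hq1) (by linarith)
    (show m - y ≤ y by omega)
  rw [binomPmf, binomPmf, sub_sub_cancel, mul_assoc, mul_assoc]
  exact mul_le_mul_of_nonneg_left (by linarith [key]) (Nat.cast_nonneg _)

/-- Monotone likelihood ratio: `y ↦ P_q(y) / P_{1-q}(y)` is nondecreasing for `q ≥ 1 / 2`. -/
theorem binomPmf_mul_binomPmf_one_sub_le (hq : 1 / 2 ≤ q) (hq1 : q ≤ 1) {x y : ℕ}
    (hxy : x ≤ y) (hy : y ≤ m) :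
    binomPmf m q x * binomPmf m (1 - q) y ≤ binomPmf m (1 - q) x * binomPmf m q y := by
  have key := pow_mul_pow_le_pow_mul_pow_s3 (t := q) (sub_nonneg.2 hq1) (by linarith)
    (show x + (m - y) ≤ (m - x) + y by omega)
  simp only [binomPmf, sub_sub_cancel, pow_add] at key ⊢
  calc _ = (m.choose x * m.choose y : ℝ) *
          (q ^ x * q ^ (m - y) * ((1 - q) ^ (m - x) * (1 - q) ^ y)) := by ring
    _ ≤ (m.choose x * m.choose y : ℝ) *
          (q ^ (m - x) * q ^ y * ((1 - q) ^ x * (1 - q) ^ (m - y))) := by gcongr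
    _ = _ := by ring

end binomPmf

section binomPr

variable {m : ℕ} {q : ℝ}

theorem binomPr_eq_sum_s3 (m : ℕ) (q : ℝ) (S : Set ℕ) :
    binomPr m q S = ∑ y ∈ range (m + 1), S.indicator (binomPmf m q) y := rfl

theorem binomPr_nonneg (hq0 : 0 ≤ q) (hq1 : q ≤ 1) (S : Set ℕ) : 0 ≤ binomPr m q S :=
  sum_nonneg fun _ _ => Set.indicator_nonneg (fun y _ => binomPmf_nonneg hq0 hq1 y) _

theorem binomPr_pos_of_mem (hq0 : 0 < q) (hq1 : q ≤ 1) {S : Set ℕ} (hm : m ∈ S) :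
    0 < binomPr m q S := by
  rw [binomPr_eq_sum_s3]
  refine sum_pos' (fun y _ => ?_) ⟨m, self_mem_range_succ m, ?_⟩
  · exact Set.indicator_nonneg (fun y _ => binomPmf_nonneg hq0.le hq1 y) _
  · rw [Set.indicator_of_mem hm, binomPmf_self]
    positivity

theorem binomPr_empty (m : ℕ) (q : ℝ) : binomPr m q ∅ = 0 := by
  simp [binomPr]

theorem binomPr_union {S T : Set ℕ} (h : Disjoint S T) :
    binomPr m q (S ∪ T) = binomPr m q S + binomPr m q T := by
  simp only [binomPr_eq_sum_s3, Set.indicator_union_of_disjoint h, sum_add_distrib]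

theorem binomPr_preimage_sub (S : Set ℕ) :
    binomPr m q ((m - ·) ⁻¹' S) = binomPr m (1 - q) S := by
  rw [binomPr_eq_sum_s3, binomPr_eq_sum_s3, ← sum_range_reflect]
  refine sum_congr rfl fun y hy => ?_
  have hy : y ≤ m := Nat.lt_succ_iff.1 (mem_range.1 hy)
  have hyS : m - y ∈ (m - ·) ⁻¹' S ↔ y ∈ S := by simp [Nat.sub_sub_self hy]
  rw [Nat.add_sub_cancel]
  by_cases h : y ∈ S
  · rw [Set.indicator_of_mem (hyS.2 h), Set.indicator_of_mem h, binomPmf_one_sub hy]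
  · rw [Set.indicator_of_notMem (mt hyS.1 h), Set.indicator_of_notMem h]

theorem binomPr_one_sub_le (hq : 1 / 2 ≤ q) (hq1 : q ≤ 1) {S : Set ℕ}
    (hS : ∀ y ∈ S, m ≤ 2 * y) : binomPr m (1 - q) S ≤ binomPr m q S :=
  sum_le_sum fun y hy => Set.indicator_le_indicator' fun hyS =>
    binomPmf_one_sub_le hq hq1 (Nat.lt_succ_iff.1 (mem_range.1 hy)) (hS y hyS)

theorem binomPr_mul_binomPr_one_sub_le (hq : 1 / 2 ≤ q) (hq1 : q ≤ 1) {S T : Set ℕ}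
    (hST : ∀ x ∈ S, ∀ y ∈ T, x ≤ y) :
    binomPr m q S * binomPr m (1 - q) T ≤ binomPr m (1 - q) S * binomPr m q T := by
  simp only [binomPr_eq_sum_s3, sum_mul_sum]
  refine sum_le_sum fun x _ => sum_le_sum fun y hy => ?_
  by_cases hxS : x ∈ S
  · by_cases hyT : y ∈ T
    · simp only [Set.indicator_of_mem hxS, Set.indicator_of_mem hyT]
      exact binomPmf_mul_binomPmf_one_sub_le hq hq1 (hST x hxS y hyT)
        (Nat.lt_succ_iff.1 (mem_range.1 hy))
    · simp [hyT]
  · simp [hxS]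

theorem binomPr_mul_binomPr_one_sub_inter_Ici_le (hq : 1 / 2 ≤ q) (hq1 : q ≤ 1)
    (S : Set ℕ) (j : ℕ) :
    binomPr m q S * binomPr m (1 - q) (S ∩ Set.Ici j) ≤
      binomPr m q (S ∩ Set.Ici j) * binomPr m (1 - q) S := by
  have hdisj : Disjoint (S \ Set.Ici j) (S ∩ Set.Ici j) := Set.disjoint_sdiff_inter
  have hbelow : ∀ x ∈ S \ Set.Ici j, ∀ y ∈ S ∩ Set.Ici j, x ≤ y := fun x hx y hy =>
    (not_le.1 hx.2).le.trans hy.2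
  have key := binomPr_mul_binomPr_one_sub_le (m := m) hq hq1 hbelow
  have hsplit (p : ℝ) : binomPr m p S =
      binomPr m p (S \ Set.Ici j) + binomPr m p (S ∩ Set.Ici j) := by
    rw [← binomPr_union hdisj, Set.sdiff_union_inter]
  rw [hsplit q, hsplit (1 - q)]
  nlinarith [key]

end binomPr

theorem setOf_sub_lt_inter_setOf_le_max (m j : ℕ) :
    {y | m - y < y} ∩ {y | j ≤ max y (m - y)} = majorityTail m j := by
  ext y
  simp only [majorityTail, Set.mem_inter_iff, Set.mem_ofPred_eq, le_max_iff]
  omega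

theorem setOf_lt_sub_inter_setOf_le_max (m j : ℕ) :
    {y | y < m - y} ∩ {y | j ≤ max y (m - y)} = (m - ·) ⁻¹' majorityTail m j := by
  ext y
  simp only [majorityTail, Set.mem_inter_iff, Set.mem_preimage, Set.mem_ofPred_eq, le_max_iff]
  omega

theorem setOf_le_max_sub (m j : ℕ) :
    {y | j ≤ max y (m - y)} =
      majorityTail m j ∪ (m - ·) ⁻¹' majorityTail m j ∪ {y | 2 * y = m ∧ j ≤ y} := by
  ext y
  simp only [majorityTail, Set.mem_union, Set.mem_preimage, Set.mem_ofPred_eq, le_max_iff]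
  omega

theorem majorityTail_inter_Ici {m j k : ℕ} (h : j ≤ k) :
    majorityTail m j ∩ Set.Ici k = majorityTail m k := by
  ext y
  simp only [majorityTail, Set.mem_inter_iff, Set.mem_Ici, Set.mem_ofPred_eq]
  omega

theorem binomPr_setOf_le_max_sub (m j : ℕ) (q : ℝ) :
    binomPr m q {y | j ≤ max y (m - y)} =
      binomPr m q (majorityTail m j) + binomPr m (1 - q) (majorityTail m j) +
        binomPr m q {y | 2 * y = m ∧ j ≤ y} := by
  have hdisj₁ : Disjoint (majorityTail m j) ((m - ·) ⁻¹' majorityTail m j) := by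
    rw [Set.disjoint_left]
    simp only [majorityTail, Set.mem_preimage, Set.mem_ofPred_eq]
    omega
  have hdisj₂ : Disjoint (majorityTail m j ∪ (m - ·) ⁻¹' majorityTail m j)
      {y | 2 * y = m ∧ j ≤ y} := by
    rw [Set.disjoint_left]
    simp only [majorityTail, Set.mem_union, Set.mem_preimage, Set.mem_ofPred_eq]
    omega
  rw [setOf_le_max_sub, binomPr_union hdisj₂, binomPr_union hdisj₁, binomPr_preimage_sub]

theorem div_sub_div_le_of_mul_le_mul {K : Type*} [Field K] [LinearOrder K] [IsStrictOrderedRing K]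
    {u v u' v' t : K} (hv : 0 ≤ v) (hv' : 0 ≤ v') (ht : 0 ≤ t) (hu : 0 < u) (hu' : 0 < u')
    (hv'u' : v' ≤ u') (hcross : u' * v ≤ u * v') :
    u' / (u' + v' + t) - v' / (u' + v' + t) ≤ u / (u + v) - v / (u + v) := by
  rw [← sub_div, ← sub_div]
  calc (u' - v') / (u' + v' + t) ≤ (u' - v') / (u' + v') :=
        div_le_div_of_nonneg_left (sub_nonneg.2 hv'u') (by positivity) (by linarith)
    _ ≤ (u - v) / (u + v) := by
        rw [div_le_div_iff₀ (by positivity) (by positivity)]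
        nlinarith

theorem conditional_bias_monotone_ge_general
    (m : ℕ) (q : ℝ) (hq : 1 / 2 < q) (hq1 : q < 1)
    (i i' : ℕ) (hi' : m ≤ 2 * i') (hii : i' ≤ i) (him : i ≤ m) :
    binomPr m q ({y | m - y < y} ∩ {y | i' ≤ max y (m - y)}) /
          binomPr m q {y | i' ≤ max y (m - y)} -
        binomPr m q ({y | y < m - y} ∩ {y | i' ≤ max y (m - y)}) /
          binomPr m q {y | i' ≤ max y (m - y)} ≤
      binomPr m q ({y | m - y < y} ∩ {y | i ≤ max y (m - y)}) /
          binomPr m q {y | i ≤ max y (m - y)} -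
        binomPr m q ({y | y < m - y} ∩ {y | i ≤ max y (m - y)}) /
          binomPr m q {y | i ≤ max y (m - y)} := by
  rcases hii.eq_or_lt with rfl | hlt
  · exact le_rfl
  have hq' : 1 / 2 ≤ q := hq.le
  have hq0 : 0 < q := by linarith
  have h1q0 : 0 ≤ 1 - q := by linarith
  have h1q1 : 1 - q ≤ 1 := by linarith
  have hno_tie : {y | 2 * y = m ∧ i ≤ y} = ∅ := by
    ext y
    simp only [Set.mem_ofPred_eq, Set.mem_empty_iff_false, iff_false]
    omega
  have hmem (j : ℕ) (hj : j ≤ m) : m ∈ majorityTail m j := ⟨by omega, hj⟩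
  have hcross :=
    binomPr_mul_binomPr_one_sub_inter_Ici_le (m := m) hq' hq1.le (majorityTail m i') i
  rw [majorityTail_inter_Ici hii] at hcross
  simp only [setOf_sub_lt_inter_setOf_le_max, setOf_lt_sub_inter_setOf_le_max,
    binomPr_preimage_sub, binomPr_setOf_le_max_sub, hno_tie, binomPr_empty, add_zero]
  exact div_sub_div_le_of_mul_le_mul (binomPr_nonneg h1q0 h1q1 _) (binomPr_nonneg h1q0 h1q1 _)
    (binomPr_nonneg hq0.le hq1.le _) (binomPr_pos_of_mem hq0 hq1.le (hmem i him))
    (binomPr_pos_of_mem hq0 hq1.le (hmem i' (by omega)))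
    (binomPr_one_sub_le hq' hq1.le fun y hy => hy.1.le) hcross

/-- monotonicity of the conditional bias given `M ≥ i`, where
`Y1 ~ Binomial(m, q)`, `Y2 = m - Y1`, `M = max(Y1, Y2)`, and
`m/2 ≤ i' ≤ i ≤ m` (note `m/2 ≤ i'` iff `m ≤ 2 * i'`). -/
theorem conditional_bias_monotone_ge
    (m : ℕ) (hm : 1 ≤ m) (q : ℝ) (hq : 1 / 2 < q) (hq1 : q < 1)
    (i i' : ℕ) (hi' : m ≤ 2 * i') (hii : i' ≤ i) (him : i ≤ m) :
    binomPr m q ({y | m - y < y} ∩ {y | i' ≤ max y (m - y)}) /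
          binomPr m q {y | i' ≤ max y (m - y)} -
        binomPr m q ({y | y < m - y} ∩ {y | i' ≤ max y (m - y)}) /
          binomPr m q {y | i' ≤ max y (m - y)} ≤
      binomPr m q ({y | m - y < y} ∩ {y | i ≤ max y (m - y)}) /
          binomPr m q {y | i ≤ max y (m - y)} -
        binomPr m q ({y | y < m - y} ∩ {y | i ≤ max y (m - y)}) /
          binomPr m q {y | i ≤ max y (m - y)} :=
  conditional_bias_monotone_ge_general m q hq hq1 i i' hi' hii him
end
end

section
/- Let 0 < C2 < 1 and C3 > 2 be constants and set C4 = (3·C3/(1 − C2))². Let n ≥ 2 be an integer with k ≤ n, assume p_1 ≥ p_j for all j, and let R_{C2} = {i ∈ {1,…,k} : p_i ≤ C2·p_1} be the set of C2-rare opinions. If h·p_1 > C4·log n, then Pr( ∩_{i ∈ R_{C2}} {X_1 > X_i} ) ≥ 1 − 1/n^{C3 − 2}. -/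
open scoped BigOperators

noncomputable section

/-- The number of the `h` i.i.d. samples `ω` that are equal to opinion `i`. -/
def cnt {k h : ℕ} (ω : Fin h → Fin k) (i : Fin k) : ℕ :=
  (Finset.univ.filter fun j => ω j = i).card

/-- The probability of the event `A` under `h` i.i.d. samples drawn from the
probability vector `p` on `Fin k` (multinomial sampling). -/
def multiPr (k h : ℕ) (p : Fin k → ℝ) (A : Set (Fin h → Fin k)) : ℝ :=
  ∑ ω : Fin h → Fin k, A.indicator (fun ω => ∏ j, p (ω j)) ω

/-- The maximal number of samples received by an opinion. -/
def maxCnt {k h : ℕ} (ω : Fin h → Fin k) : ℕ :=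
  Finset.univ.sup (cnt ω)

/-- The number of opinions achieving the maximal number of samples. -/
def numMax {k h : ℕ} (ω : Fin h → Fin k) : ℕ :=
  (Finset.univ.filter fun i => cnt ω i = maxCnt ω).card

/-- The probability that opinion `i` wins the `h`-majority with uniform
tie-breaking, jointly with the event `A`:
`E[ 1_A · 1{X_i = max_l X_l} / #{l : X_l maximal} ]`. -/
def winPrOn (k h : ℕ) (p : Fin k → ℝ) (A : Set (Fin h → Fin k)) (i : Fin k) : ℝ :=
  ∑ ω : Fin h → Fin k,
    (A ∩ {ω' | cnt ω' i = maxCnt ω'}).indicator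
      (fun ω => (∏ j, p (ω j)) / (numMax ω : ℝ)) ω

/-- The probability that opinion `i` wins the `h`-majority with uniform tie-breaking. -/
def winPr (k h : ℕ) (p : Fin k → ℝ) (i : Fin k) : ℝ :=
  winPrOn k h p Set.univ i

/-- `W_{i,strict}`: opinion `i` is the unique most sampled opinion. -/
def Wstrict (k h : ℕ) (i : Fin k) : Set (Fin h → Fin k) :=
  {ω | ∀ j, j ≠ i → cnt ω j < cnt ω i}

/-- `W_{i,ties}`: opinion `i` is among the most sampled opinions. -/
def Wties (k h : ℕ) (i : Fin k) : Set (Fin h → Fin k) :=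
  {ω | ∀ j, j ≠ i → cnt ω j ≤ cnt ω i}

/-- `W_{1,2,strict}`: opinion `i₁` or opinion `i₂` is the unique most sampled opinion. -/
def W12strict (k h : ℕ) (i₁ i₂ : Fin k) : Set (Fin h → Fin k) :=
  Wstrict k h i₁ ∪ Wstrict k h i₂

/-- Opinion 1 (as an element of `Fin k`, assuming `2 ≤ k`). -/
def o₁ (k : ℕ) (hk : 2 ≤ k) : Fin k := ⟨0, by omega⟩

/-- Opinion 2 (as an element of `Fin k`, assuming `2 ≤ k`). -/
def o₂ (k : ℕ) (hk : 2 ≤ k) : Fin k := ⟨1, by omega⟩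

/-!
Compare opinion 1 with a single rare opinion `i` by an exponential Markov inequality: tilting
each sample by `s = √C2` if it is opinion 1 and by `1/s` if it is opinion `i` gives
`Pr(X_1 ≤ X_i) ≤ (1 - p_1 (1 - s) + p_i (1/s - 1))^h ≤ (1 - p_1 (1 - s)^2)^h
≤ exp(-h p_1 (1 - C2)^2 / 4)`, which the assumption on `h p_1` makes at most `n^(1 - C3)`.
A union bound over the at most `k ≤ n` rare opinions finishes the proof.
-/

open Finset Real

lemma prod_comp_eq_prod_pow_cnt {M : Type*} [CommMonoid M] {k h : ℕ} (ω : Fin h → Fin k)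
    (g : Fin k → M) : ∏ j, g (ω j) = ∏ a, g a ^ cnt ω a := by
  rw [← Finset.prod_fiberwise univ ω]
  refine Finset.prod_congr rfl fun a _ => ?_
  rw [Finset.prod_congr rfl fun j hj => congrArg g (Finset.mem_filter.mp hj).2, prod_const]
  rfl

section multiPr

variable {k h : ℕ} {p : Fin k → ℝ}

lemma multiPr_compl (hps : ∑ a, p a = 1) (A : Set (Fin h → Fin k)) :
    multiPr k h p Aᶜ = 1 - multiPr k h p A := by
  have htotal : ∑ ω : Fin h → Fin k, ∏ j, p (ω j) = 1 := by rw [← Fintype.sum_pow, hps, one_pow]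
  rw [eq_sub_iff_add_eq, multiPr, multiPr, ← sum_add_distrib, ← htotal]
  exact sum_congr rfl fun ω _ => Set.indicator_compl_add_self_apply A _ ω

lemma multiPr_biUnion_le (hp0 : ∀ a, 0 ≤ p a) {ι : Type*} (s : Finset ι)
    (A : ι → Set (Fin h → Fin k)) :
    multiPr k h p (⋃ i ∈ s, A i) ≤ ∑ i ∈ s, multiPr k h p (A i) := by
  simp only [multiPr]
  rw [sum_comm]
  refine sum_le_sum fun ω _ => ?_
  have hind : ∀ B : Set (Fin h → Fin k), 0 ≤ B.indicator (fun ω => ∏ j, p (ω j)) ω :=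
    fun B => Set.indicator_nonneg (fun ω _ => prod_nonneg fun j _ => hp0 _) ω
  by_cases hω : ω ∈ ⋃ i ∈ s, A i
  · obtain ⟨i, hi, hωi⟩ := Set.mem_iUnion₂.mp hω
    rw [Set.indicator_of_mem hω, ← Set.indicator_of_mem hωi (fun ω => ∏ j, p (ω j))]
    exact single_le_sum (fun i _ => hind (A i)) hi
  · rw [Set.indicator_of_notMem hω]
    exact sum_nonneg fun i _ => hind (A i)

lemma multiPr_le_pow_of_one_le_prod (hp0 : ∀ a, 0 ≤ p a) {g : Fin k → ℝ} (hg : ∀ a, 0 ≤ g a)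
    {A : Set (Fin h → Fin k)} (hA : ∀ ω ∈ A, 1 ≤ ∏ j, g (ω j)) :
    multiPr k h p A ≤ (∑ a, p a * g a) ^ h := by
  rw [Fintype.sum_pow, multiPr]
  refine sum_le_sum fun ω _ => ?_
  have hpω : 0 ≤ ∏ j, p (ω j) := prod_nonneg fun j _ => hp0 _
  rw [prod_mul_distrib]
  by_cases hω : ω ∈ A
  · rw [Set.indicator_of_mem hω]
    exact le_mul_of_one_le_right hpω (hA ω hω)
  · rw [Set.indicator_of_notMem hω]
    exact mul_nonneg hpω (prod_nonneg fun j _ => hg _)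

lemma multiPr_cnt_le_cnt_le (hp0 : ∀ a, 0 ≤ p a) (hps : ∑ a, p a = 1) {i j : Fin k}
    (hij : i ≠ j) {s : ℝ} (hs0 : 0 < s) (hs1 : s ≤ 1) :
    multiPr k h p {ω | cnt ω i ≤ cnt ω j} ≤ (1 - p i * (1 - s) + p j * (s⁻¹ - 1)) ^ h := by
  set g : Fin k → ℝ := fun a => 1 + (if a = i then s - 1 else 0) + (if a = j then s⁻¹ - 1 else 0)
  have hgi : g i = s := by simp [g, hij]
  have hgj : g j = s⁻¹ := by simp [g, hij.symm]
  have hg0 : ∀ a, 0 ≤ g a := fun a => by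
    by_cases hai : a = i
    · subst hai; rw [hgi]; exact hs0.le
    by_cases haj : a = j
    · subst haj; rw [hgj]; positivity
    simp [g, hai, haj]
  have hsum : ∑ a, p a * g a = 1 - p i * (1 - s) + p j * (s⁻¹ - 1) := by
    simp only [g, mul_add, mul_ite, mul_zero, mul_one, sum_add_distrib, sum_ite_eq', mem_univ,
      if_true, hps]
    ring
  rw [← hsum]
  refine multiPr_le_pow_of_one_le_prod hp0 hg0 fun ω (hω : cnt ω i ≤ cnt ω j) => ?_
  rw [prod_comp_eq_prod_pow_cnt, Fintype.prod_eq_mul i j hij fun a ha => by simp [g, ha.1, ha.2],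
    hgi, hgj]
  calc (1 : ℝ) = s ^ cnt ω j * s⁻¹ ^ cnt ω j := by
        rw [← mul_pow, mul_inv_cancel₀ hs0.ne', one_pow]
    _ ≤ s ^ cnt ω i * s⁻¹ ^ cnt ω j :=
      mul_le_mul_of_nonneg_right (pow_le_pow_of_le_one hs0.le hs1 hω) (by positivity)

lemma multiPr_cnt_le_cnt_le_exp (hp0 : ∀ a, 0 ≤ p a) (hps : ∑ a, p a = 1) {i j : Fin k}
    (hij : i ≠ j) {c : ℝ} (hc0 : 0 < c) (hc1 : c < 1) (hji : p j ≤ c * p i) :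
    multiPr k h p {ω | cnt ω i ≤ cnt ω j} ≤ exp (-(h * p i * (1 - c) ^ 2 / 4)) := by
  set s := √c
  have hs0 : 0 < s := sqrt_pos.mpr hc0
  have hs1 : s < 1 := (sqrt_lt' one_pos).mpr (by rwa [one_pow])
  have hss : s * s = c := mul_self_sqrt hc0.le
  have hinv1 : 0 ≤ s⁻¹ - 1 := sub_nonneg.mpr (one_le_inv_iff₀.mpr ⟨hs0, hs1.le⟩)
  have hbase0 : 0 ≤ 1 - p i * (1 - s) + p j * (s⁻¹ - 1) := by
    have hpi1 : p i ≤ 1 := hps ▸ single_le_sum (fun a _ => hp0 a) (mem_univ i)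
    nlinarith [hp0 i, mul_nonneg (hp0 j) hinv1]
  have hbase : 1 - p i * (1 - s) + p j * (s⁻¹ - 1) ≤ 1 - p i * (1 - c) ^ 2 / 4 := by
    have hinv : c * (s⁻¹ - 1) = s - c := by
      rw [← hss, mul_sub, mul_assoc, mul_inv_cancel₀ hs0.ne', mul_one, mul_one]
    have hrare : p j * (s⁻¹ - 1) ≤ p i * (s - c) := by
      rw [← hinv, mul_left_comm, ← mul_assoc]
      exact mul_le_mul_of_nonneg_right hji hinv1
    -- `1 - c = (1 - s)(1 + s) ≤ 2 (1 - s)`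
    have hgap : (1 - c) ^ 2 / 4 ≤ (1 - s) ^ 2 := by nlinarith
    have hsq : p i * (1 - s) ^ 2 = p i * (1 - s) - p i * (s - c) := by rw [← hss]; ring
    linarith [mul_le_mul_of_nonneg_left hgap (hp0 i)]
  calc multiPr k h p {ω | cnt ω i ≤ cnt ω j}
      ≤ (1 - p i * (1 - s) + p j * (s⁻¹ - 1)) ^ h := multiPr_cnt_le_cnt_le hp0 hps hij hs0 hs1.le
    _ ≤ (1 - p i * (1 - c) ^ 2 / 4) ^ h := pow_le_pow_left₀ hbase0 hbase h
    _ ≤ exp (-(p i * (1 - c) ^ 2 / 4)) ^ h :=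
      pow_le_pow_left₀ (hbase0.trans hbase) (one_sub_le_exp_neg _) h
    _ = exp (-(h * p i * (1 - c) ^ 2 / 4)) := by rw [← exp_nat_mul]; ring_nf

end multiPr

lemma exp_neg_le_rpow_of_sq_mul_log_lt {n c C y : ℝ} (hn : 1 ≤ n) (hc : c < 1)
    (hy : (3 * C / (1 - c)) ^ 2 * log n < y) :
    exp (-(y * (1 - c) ^ 2 / 4)) ≤ n ^ (-(C - 1)) := by
  have hlog : 0 ≤ log n := log_nonneg hn
  have hc' : 0 < (1 - c) ^ 2 := by nlinarith
  have hy' : 9 * C ^ 2 / 4 * log n ≤ y * (1 - c) ^ 2 / 4 := by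
    have hcoef : (3 * C / (1 - c)) ^ 2 * ((1 - c) ^ 2 / 4) = 9 * C ^ 2 / 4 := by
      field_simp [sub_ne_zero.mpr hc.ne']
      ring
    have := mul_le_mul_of_nonneg_right hy.le (div_nonneg hc'.le zero_le_four)
    rwa [mul_right_comm, hcoef, ← mul_div_assoc] at this
  rw [rpow_def_of_pos (by linarith), exp_le_exp]
  nlinarith [sq_nonneg (3 * C - 2 / 3)]

theorem rare_opinions_lose_general
    (C2 C3 : ℝ) (hC2 : 0 < C2) (hC2' : C2 < 1)
    (n : ℕ) (k h : ℕ) (hk : 2 ≤ k) (hkn : k ≤ n)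
    (p : Fin k → ℝ) (hp0 : ∀ i, 0 ≤ p i) (hps : ∑ i, p i = 1)
    (hhp : (3 * C3 / (1 - C2)) ^ 2 * Real.log n < (h : ℝ) * p (o₁ k hk)) :
    1 - 1 / (n : ℝ) ^ (C3 - 2) ≤
      multiPr k h p
        {ω | ∀ i, p i ≤ C2 * p (o₁ k hk) → cnt ω i < cnt ω (o₁ k hk)} := by
  set i₁ := o₁ k hk
  set R := univ.filter fun i => p i ≤ C2 * p i₁
  have hn : (1 : ℝ) ≤ n := by exact_mod_cast (by omega : 1 ≤ n)
  have hp₁ : 0 < p i₁ :=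
    pos_of_mul_pos_right ((mul_nonneg (sq_nonneg _) (log_natCast_nonneg n)).trans_lt hhp)
      h.cast_nonneg
  have hR : ∀ i ∈ R, multiPr k h p {ω | cnt ω i₁ ≤ cnt ω i} ≤ (n : ℝ) ^ (-(C3 - 1)) := by
    intro i hi
    have hi : p i ≤ C2 * p i₁ := (mem_filter.mp hi).2
    have hne : i₁ ≠ i := by
      rintro rfl
      nlinarith
    exact (multiPr_cnt_le_cnt_le_exp hp0 hps hne hC2 hC2' hi).trans
      (exp_neg_le_rpow_of_sq_mul_log_lt hn hC2' hhp)
  have hbad : {ω : Fin h → Fin k | ∀ i, p i ≤ C2 * p i₁ → cnt ω i < cnt ω i₁}ᶜ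
      = ⋃ i ∈ R, {ω | cnt ω i₁ ≤ cnt ω i} := by
    ext ω
    simp [R]
  have hcard : (#R : ℝ) ≤ n := by exact_mod_cast (card_le_univ R).trans (by simpa using hkn)
  rw [← compl_compl {ω | _}, multiPr_compl hps, hbad]
  calc 1 - 1 / (n : ℝ) ^ (C3 - 2) = 1 - n * (n : ℝ) ^ (-(C3 - 1)) := by
        rw [one_div, ← rpow_neg (by linarith), show -(C3 - 2) = 1 + -(C3 - 1) by ring,
          rpow_add (by linarith), rpow_one]
    _ ≤ 1 - ∑ i ∈ R, (n : ℝ) ^ (-(C3 - 1)) := by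
      rw [sum_const, nsmul_eq_mul]
      gcongr
    _ ≤ 1 - ∑ i ∈ R, multiPr k h p {ω | cnt ω i₁ ≤ cnt ω i} := by gcongr with i hi; exact hR i hi
    _ ≤ 1 - multiPr k h p (⋃ i ∈ R, {ω | cnt ω i₁ ≤ cnt ω i}) := by
      gcongr
      exact multiPr_biUnion_le hp0 R _

/-- if `h·p_1 > C4·log n` with `C4 = (3·C3/(1 - C2))²`, then with
probability at least `1 - 1/n^(C3-2)` opinion 1 is sampled strictly more than
every `C2`-rare opinion (i.e. every `i` with `p_i ≤ C2·p_1`). -/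
theorem rare_opinions_lose
    (C2 C3 : ℝ) (hC2 : 0 < C2) (hC2' : C2 < 1) (hC3 : 2 < C3)
    (n : ℕ) (hn : 2 ≤ n) (k h : ℕ) (hk : 2 ≤ k) (hh : 1 ≤ h) (hkn : k ≤ n)
    (p : Fin k → ℝ) (hp0 : ∀ i, 0 ≤ p i) (hps : ∑ i, p i = 1)
    (hmax : ∀ j, p j ≤ p (o₁ k hk))
    (hhp : (3 * C3 / (1 - C2)) ^ 2 * Real.log n < (h : ℝ) * p (o₁ k hk)) :
    1 - 1 / (n : ℝ) ^ (C3 - 2) ≤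
      multiPr k h p
        {ω | ∀ i, p i ≤ C2 * p (o₁ k hk) → cnt ω i < cnt ω (o₁ k hk)} :=
  rare_opinions_lose_general C2 C3 hC2 hC2' n k h hk hkn p hp0 hps hhp
end
end

section
/- There exists a natural number n0 such that for all integers n ≥ n0 with k ≤ n the following holds: if p_1 ≥ p_2 ≥ … ≥ p_k and h·p_1 ≥ 324·log n, then Pr(W_1) ≥ p_1/3, where Pr(W_1) is the probability that opinion 1 wins the h-majority with uniform tie-breaking. -/
/-!
An opinion `i` with `p i ≤ p₁ / 2` can only win if `X_i ≥ X_1`, and by Chernoff bounds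
`X_i < 2/3 · h p₁ < X_1` except with probability `2 exp (-h p₁ / 120) ≤ 2 / n²`; the at most `n`
such opinions therefore win with total probability at most `2 / n ≤ 1 / 3`. The remaining
opinions have `p i > p₁ / 2`, so there are at most `2 / p₁` of them, and swapping the labels `1`
and `i` shows that none of them wins more often than opinion `1`. Since the winning probabilities
add up to `1`, this gives `2 / 3 ≤ (2 / p₁) Pr(W_1)`.
-/

open scoped BigOperators

noncomputable section

open Finset Real

variable {k h : ℕ} {p : Fin k → ℝ}

lemma prod_apply_eq_prod_pow_cnt {M : Type*} [CommMonoid M] (q : Fin k → M) (ω : Fin h → Fin k) :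
    ∏ j, q (ω j) = ∏ l, q l ^ cnt ω l := by
  rw [← prod_fiberwise_of_maps_to' (fun j _ => mem_univ (ω j)) q]
  simp only [prod_const]
  rfl

lemma sum_prod_apply_eq_pow {R : Type*} [CommSemiring R] (q : Fin k → R) :
    ∑ ω : Fin h → Fin k, ∏ j, q (ω j) = (∑ l, q l) ^ h := by
  rw [← Fintype.prod_sum, prod_const, card_univ, Fintype.card_fin]

lemma cnt_le_maxCnt (ω : Fin h → Fin k) (i : Fin k) : cnt ω i ≤ maxCnt ω :=
  le_sup (mem_univ i)

lemma numMax_pos (hk : 0 < k) (ω : Fin h → Fin k) : 0 < numMax ω := by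
  obtain ⟨i, -, hi⟩ := exists_mem_eq_sup univ ⟨⟨0, hk⟩, mem_univ _⟩ (cnt ω)
  exact card_pos.2 ⟨i, mem_filter.2 ⟨mem_univ _, hi.symm⟩⟩

section Permutation

variable (σ : Equiv.Perm (Fin k)) (ω : Fin h → Fin k)

lemma cnt_perm_comp (l : Fin k) : cnt (σ ∘ ω) l = cnt ω (σ.symm l) := by
  simp only [cnt, Function.comp_apply, ← Equiv.eq_symm_apply]

lemma maxCnt_perm_comp : maxCnt (σ ∘ ω) = maxCnt ω := by
  have : cnt (σ ∘ ω) = cnt ω ∘ σ.symm := funext (cnt_perm_comp σ ω)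
  rw [maxCnt, this, maxCnt, ← Equiv.coe_toEmbedding, ← sup_map, map_univ_equiv]

lemma numMax_perm_comp : numMax (σ ∘ ω) = numMax ω := by
  refine card_equiv σ.symm fun l => ?_
  simp [cnt_perm_comp, maxCnt_perm_comp]

end Permutation

lemma multiPr_mono (hp : ∀ i, 0 ≤ p i) {A B : Set (Fin h → Fin k)} (hAB : A ⊆ B) :
    multiPr k h p A ≤ multiPr k h p B :=
  sum_le_sum fun ω _ =>
    Set.indicator_le_indicator_of_subset hAB (fun ω => prod_nonneg fun j _ => hp (ω j)) ω

lemma multiPr_union_le (hp : ∀ i, 0 ≤ p i) (A B : Set (Fin h → Fin k)) :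
    multiPr k h p (A ∪ B) ≤ multiPr k h p A + multiPr k h p B := by
  rw [multiPr, multiPr, multiPr, ← sum_add_distrib]
  refine sum_le_sum fun ω _ => ?_
  rw [← Set.indicator_union_add_inter_apply]
  exact le_add_of_nonneg_right
    (Set.indicator_nonneg (fun ω _ => prod_nonneg fun j _ => hp (ω j)) ω)

lemma sum_prod_mul_exp_cnt (hs : ∑ l, p l = 1) (i : Fin k) (t : ℝ) :
    ∑ ω : Fin h → Fin k, (∏ j, p (ω j)) * exp (t * cnt ω i) = (1 + p i * (exp t - 1)) ^ h := by
  set q : Fin k → ℝ := fun l => p l * if l = i then exp t else 1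
  have hq : ∀ ω : Fin h → Fin k, (∏ j, p (ω j)) * exp (t * cnt ω i) = ∏ j, q (ω j) := by
    intro ω
    rw [prod_mul_distrib, prod_apply_eq_prod_pow_cnt (fun l => if l = i then exp t else 1)]
    simp only [ite_pow, one_pow, prod_ite_eq', mem_univ, if_true, ← exp_nat_mul, mul_comm t]
  have hqsum : ∑ l, q l = 1 + p i * (exp t - 1) := by
    calc ∑ l, q l = ∑ l, (p l + if l = i then p i * (exp t - 1) else 0) := by
          refine Fintype.sum_congr _ _ fun l => ?_
          by_cases hl : l = i
          · simp only [q, hl, if_true]; ring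
          · simp only [q, if_neg hl, mul_one, add_zero]
      _ = 1 + p i * (exp t - 1) := by rw [sum_add_distrib, hs, sum_ite_eq', if_pos (mem_univ i)]
  rw [Fintype.sum_congr _ _ hq, sum_prod_apply_eq_pow, hqsum]

/-- Chernoff: Markov's inequality for `exp (t * X_i)`, whose mean is `(1 + p i (eᵗ - 1))^h`. -/
lemma multiPr_le_exp (hp : ∀ i, 0 ≤ p i) (hs : ∑ l, p l = 1) (i : Fin k) {t T : ℝ}
    {A : Set (Fin h → Fin k)} (hA : ∀ ω ∈ A, t * T ≤ t * cnt ω i) :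
    multiPr k h p A ≤ exp (h * p i * (exp t - 1) - t * T) := by
  have hpi : p i ≤ 1 := hs ▸ single_le_sum (fun l _ => hp l) (mem_univ i)
  have hbase : 0 ≤ 1 + p i * (exp t - 1) := by nlinarith [hp i, exp_pos t]
  calc multiPr k h p A
      ≤ ∑ ω : Fin h → Fin k, (∏ j, p (ω j)) * exp (t * cnt ω i - t * T) := by
        refine sum_le_sum fun ω _ => ?_
        have hw : 0 ≤ ∏ j, p (ω j) := prod_nonneg fun j _ => hp (ω j)
        by_cases hω : ω ∈ A
        · rw [Set.indicator_of_mem hω]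
          exact le_mul_of_one_le_right hw (one_le_exp (sub_nonneg.2 (hA ω hω)))
        · rw [Set.indicator_of_notMem hω]
          positivity
    _ = (1 + p i * (exp t - 1)) ^ h * exp (-(t * T)) := by
        simp_rw [sub_eq_add_neg, exp_add, ← mul_assoc, ← sum_mul]
        rw [← sub_eq_add_neg, sum_prod_mul_exp_cnt hs]
    _ ≤ exp (p i * (exp t - 1)) ^ h * exp (-(t * T)) := by
        gcongr
        linarith [add_one_le_exp (p i * (exp t - 1))]
    _ = exp (h * p i * (exp t - 1) - t * T) := by
        rw [← exp_nat_mul, ← exp_add]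
        ring_nf

lemma multiPr_two_thirds_le_cnt_le_exp (hp : ∀ i, 0 ≤ p i) (hs : ∑ l, p l = 1) {i j : Fin k}
    (hij : p i ≤ p j / 2) :
    multiPr k h p {ω | 2 / 3 * (h * p j) ≤ cnt ω i} ≤ exp (-(h * p j) / 120) := by
  -- the exponent is at most `h p j / 8 - 2/3 · h p j / 5 = -h p j / 120`
  have ht : 1 / 5 ≤ log (5 / 4) := by
    have := one_sub_inv_le_log_of_pos (show (0 : ℝ) < 5 / 4 by norm_num)
    norm_num at this ⊢; linarith
  refine (multiPr_le_exp hp hs i (t := log (5 / 4)) fun ω hω =>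
    mul_le_mul_of_nonneg_left hω (by linarith)).trans (exp_le_exp.2 ?_)
  have hX : 0 ≤ (h : ℝ) * p j := mul_nonneg h.cast_nonneg (hp j)
  have hhi : (h : ℝ) * p i ≤ h * p j / 2 := by
    nlinarith [mul_le_mul_of_nonneg_left hij h.cast_nonneg]
  rw [exp_log (by norm_num)]
  nlinarith

lemma multiPr_cnt_le_two_thirds_le_exp (hp : ∀ i, 0 ≤ p i) (hs : ∑ l, p l = 1) (j : Fin k) :
    multiPr k h p {ω | (cnt ω j : ℝ) ≤ 2 / 3 * (h * p j)} ≤ exp (-(h * p j) / 36) := by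
  -- the exponent is at most `-h p j / 4 + 2/3 · h p j / 3 = -h p j / 36`
  have ht : -1 / 3 ≤ log (3 / 4) := by
    have := one_sub_inv_le_log_of_pos (show (0 : ℝ) < 3 / 4 by norm_num)
    norm_num at this ⊢; linarith
  have ht' : log (3 / 4) ≤ 0 := log_nonpos (by norm_num) (by norm_num)
  refine (multiPr_le_exp hp hs j (t := log (3 / 4)) fun ω hω =>
    mul_le_mul_of_nonpos_left hω ht').trans (exp_le_exp.2 ?_)
  have hX : 0 ≤ (h : ℝ) * p j := mul_nonneg h.cast_nonneg (hp j)
  rw [exp_log (by norm_num)]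
  nlinarith

lemma winPr_eq_sum_ite (i : Fin k) :
    winPr k h p i = ∑ ω : Fin h → Fin k,
      if cnt ω i = maxCnt ω then (∏ j, p (ω j)) / numMax ω else 0 := by
  simp only [winPr, winPrOn, Set.univ_inter, Set.indicator_apply, Set.mem_ofPred_eq]

lemma winPr_nonneg (hp : ∀ i, 0 ≤ p i) (i : Fin k) : 0 ≤ winPr k h p i := by
  rw [winPr_eq_sum_ite]
  refine sum_nonneg fun ω _ => ?_
  have hw : 0 ≤ ∏ j, p (ω j) := prod_nonneg fun j _ => hp (ω j)
  split_ifs <;> positivity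

lemma sum_winPr (hk : 0 < k) (hs : ∑ l, p l = 1) : ∑ i, winPr k h p i = 1 := by
  simp_rw [winPr_eq_sum_ite]
  rw [sum_comm]
  have hω : ∀ ω : Fin h → Fin k,
      (∑ i, if cnt ω i = maxCnt ω then (∏ j, p (ω j)) / numMax ω else 0) = ∏ j, p (ω j) := by
    intro ω
    rw [← sum_filter, sum_const, nsmul_eq_mul]
    exact mul_div_cancel₀ _ (Nat.cast_ne_zero.2 (numMax_pos hk ω).ne')
  rw [Fintype.sum_congr _ _ hω, sum_prod_apply_eq_pow, hs, one_pow]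

lemma winPr_le_multiPr_cnt_le (hp : ∀ i, 0 ≤ p i) (i j : Fin k) :
    winPr k h p i ≤ multiPr k h p {ω | cnt ω j ≤ cnt ω i} := by
  rw [winPr_eq_sum_ite]
  refine sum_le_sum fun ω _ => ?_
  have hw : 0 ≤ ∏ j, p (ω j) := prod_nonneg fun j _ => hp (ω j)
  split_ifs with hi
  · have hω : ω ∈ {ω : Fin h → Fin k | cnt ω j ≤ cnt ω i} :=
      show cnt ω j ≤ cnt ω i from hi ▸ cnt_le_maxCnt ω j
    rw [Set.indicator_of_mem hω]
    exact div_le_self hw (Nat.one_le_cast.2 (numMax_pos i.pos ω))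
  · exact Set.indicator_nonneg (fun ω _ => prod_nonneg fun j _ => hp (ω j)) ω

lemma pow_mul_pow_le_pow_mul_pow_s9 {a b : ℝ} (hb : 0 ≤ b) (hba : b ≤ a) {m n : ℕ} (hmn : m ≤ n) :
    a ^ m * b ^ n ≤ a ^ n * b ^ m := by
  obtain ⟨d, rfl⟩ := Nat.exists_eq_add_of_le hmn
  have hbd : b ^ d ≤ a ^ d := pow_le_pow_left₀ hb hba d
  rw [pow_add, pow_add, mul_right_comm, mul_assoc (a ^ m)]
  exact mul_le_mul_of_nonneg_left (mul_le_mul_of_nonneg_left hbd (pow_nonneg hb m))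
    (pow_nonneg (hb.trans hba) m)

lemma prod_swap_apply_le (hp : ∀ i, 0 ≤ p i) {i j : Fin k} (hij : p j ≤ p i) (hne : i ≠ j)
    (ω : Fin h → Fin k) (hcnt : cnt ω j ≤ cnt ω i) :
    ∏ l, p (Equiv.swap i j (ω l)) ≤ ∏ l, p (ω l) := by
  refine ((prod_apply_eq_prod_pow_cnt (fun l => p (Equiv.swap i j l)) ω).trans_le ?_).trans_eq
    (prod_apply_eq_prod_pow_cnt p ω).symm
  rw [← prod_mul_prod_compl {i, j}, ← prod_mul_prod_compl {i, j} (fun l => p l ^ cnt ω l)]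
  have hcompl : ∀ l ∈ ({i, j} : Finset (Fin k))ᶜ,
      p (Equiv.swap i j l) ^ cnt ω l = p l ^ cnt ω l := by
    intro l hl
    simp only [mem_compl, mem_insert, mem_singleton, not_or] at hl
    rw [Equiv.swap_apply_of_ne_of_ne hl.1 hl.2]
  rw [prod_congr rfl hcompl, prod_pair hne, prod_pair hne, Equiv.swap_apply_left,
    Equiv.swap_apply_right]
  gcongr ?_ * _
  · exact prod_nonneg fun l _ => pow_nonneg (hp l) _
  · rw [mul_comm]
    exact pow_mul_pow_le_pow_mul_pow_s9 (hp j) hij hcnt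

lemma winPr_le_winPr_of_le (hp : ∀ i, 0 ≤ p i) {i j : Fin k} (hij : p j ≤ p i) :
    winPr k h p j ≤ winPr k h p i := by
  rcases eq_or_ne i j with rfl | hne
  · exact le_rfl
  set σ := Equiv.swap i j
  have hswap : ∀ ω : Fin h → Fin k, cnt (σ ∘ ω) j = cnt ω i := fun ω => by
    rw [cnt_perm_comp, Equiv.symm_swap, Equiv.swap_apply_right]
  rw [winPr_eq_sum_ite, winPr_eq_sum_ite,
    ← Fintype.sum_bijective (σ ∘ ·) σ.bijective.comp_left _ _ fun ω => rfl]
  refine sum_le_sum fun ω _ => ?_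
  simp only [hswap, maxCnt_perm_comp, numMax_perm_comp, Function.comp_apply]
  split_ifs with hi
  · exact div_le_div_of_nonneg_right
      (prod_swap_apply_le hp hij hne ω (hi ▸ cnt_le_maxCnt ω j)) (Nat.cast_nonneg _)
  · exact le_rfl

lemma winPr_le_two_mul_exp (hp : ∀ i, 0 ≤ p i) (hs : ∑ l, p l = 1) {i j : Fin k}
    (hij : p i ≤ p j / 2) : winPr k h p i ≤ 2 * exp (-(h * p j) / 120) := by
  set T : ℝ := 2 / 3 * (h * p j)
  have hsplit : {ω : Fin h → Fin k | cnt ω j ≤ cnt ω i} ⊆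
      {ω | T ≤ cnt ω i} ∪ {ω | (cnt ω j : ℝ) ≤ T} := by
    intro ω (hω : cnt ω j ≤ cnt ω i)
    have : (cnt ω j : ℝ) ≤ cnt ω i := by exact_mod_cast hω
    by_cases hT : T ≤ cnt ω i
    · exact Or.inl hT
    · exact Or.inr (show (cnt ω j : ℝ) ≤ T by linarith)
  have hX : 0 ≤ (h : ℝ) * p j := mul_nonneg h.cast_nonneg (hp j)
  calc winPr k h p i ≤ multiPr k h p {ω | cnt ω j ≤ cnt ω i} := winPr_le_multiPr_cnt_le hp i j
    _ ≤ multiPr k h p {ω | T ≤ cnt ω i} + multiPr k h p {ω | (cnt ω j : ℝ) ≤ T} :=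
        (multiPr_mono hp hsplit).trans (multiPr_union_le hp _ _)
    _ ≤ exp (-(h * p j) / 120) + exp (-(h * p j) / 36) :=
        add_le_add (multiPr_two_thirds_le_cnt_le_exp hp hs hij)
          (multiPr_cnt_le_two_thirds_le_exp hp hs j)
    _ ≤ 2 * exp (-(h * p j) / 120) := by
        have : exp (-(h * p j) / 36) ≤ exp (-(h * p j) / 120) := exp_le_exp.2 (by linarith)
        linarith

lemma div_three_le_winPr_of_forall_le_half (hp : ∀ i, 0 ≤ p i) (hs : ∑ l, p l = 1) {i₁ : Fin k}
    (hmax : ∀ i, p i ≤ p i₁) {c : ℝ} (hc : 0 ≤ c)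
    (hsmall : ∀ i, p i ≤ p i₁ / 2 → winPr k h p i ≤ c) (hkc : k * c ≤ 1 / 3) :
    p i₁ / 3 ≤ winPr k h p i₁ := by
  set S := univ.filter fun i => p i₁ / 2 < p i
  have htotal : ∑ i ∈ S, winPr k h p i + ∑ i ∈ univ.filter (fun i => ¬p i₁ / 2 < p i),
      winPr k h p i = 1 := by
    rw [sum_filter_add_sum_filter_not, sum_winPr i₁.pos hs]
  have hlarge : ∑ i ∈ S, winPr k h p i ≤ #S * winPr k h p i₁ := by
    simpa using sum_le_card_nsmul S _ _ fun i _ => winPr_le_winPr_of_le hp (hmax i)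
  have hrest : ∑ i ∈ univ.filter (fun i => ¬p i₁ / 2 < p i), winPr k h p i ≤ k * c := by
    refine (sum_le_card_nsmul _ _ c fun i hi => hsmall i (not_lt.1 (mem_filter.1 hi).2)).trans ?_
    rw [nsmul_eq_mul]
    gcongr
    exact_mod_cast (card_filter_le _ _).trans (card_univ.trans (Fintype.card_fin k)).le
  have hcard : #S * p i₁ ≤ 2 := by
    have : #S • (p i₁ / 2) ≤ ∑ i ∈ S, p i :=
      card_nsmul_le_sum S p _ fun i hi => (mem_filter.1 hi).2.le
    have : ∑ i ∈ S, p i ≤ 1 := hs ▸ sum_le_univ_sum_of_nonneg hp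
    rw [nsmul_eq_mul] at *
    linarith
  have hW := winPr_nonneg (h := h) hp i₁
  nlinarith [mul_le_mul_of_nonneg_right hcard hW, hp i₁]

lemma exp_neg_div_le_inv_sq {X : ℝ} {n : ℕ} (hn : 1 ≤ n) (hX : 240 * log n ≤ X) :
    exp (-X / 120) ≤ ((n : ℝ) ^ 2)⁻¹ := by
  calc exp (-X / 120) ≤ exp (log ((n : ℝ) ^ 2)⁻¹) := by
        rw [log_inv, log_pow]
        exact exp_le_exp.2 (by push_cast; linarith)
    _ = ((n : ℝ) ^ 2)⁻¹ := exp_log (by positivity)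

/-- if `p_1 ≥ p_2 ≥ … ≥ p_k`, `k ≤ n` and `h·p_1 ≥ 324·log n`, then the
probability that opinion 1 wins the `h`-majority with uniform tie-breaking is at
least `p_1/3` (for `n` large enough). -/
theorem opinion_one_wins_prob_lower_bound :
    ∃ n0 : ℕ, ∀ (n k h : ℕ), n0 ≤ n → ∀ (hk : 2 ≤ k), 1 ≤ h → k ≤ n →
      ∀ p : Fin k → ℝ, (∀ i, 0 ≤ p i) → ∑ i, p i = 1 →
        (∀ i j : Fin k, i ≤ j → p j ≤ p i) →
        324 * Real.log n ≤ (h : ℝ) * p (o₁ k hk) →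
        p (o₁ k hk) / 3 ≤ winPr k h p (o₁ k hk) := by
  refine ⟨6, fun n k h hn hk _ hkn p hp hs hsorted hlog => ?_⟩
  have hn₆ : (6 : ℝ) ≤ n := by exact_mod_cast hn
  have hexp : exp (-(h * p (o₁ k hk)) / 120) ≤ ((n : ℝ) ^ 2)⁻¹ :=
    exp_neg_div_le_inv_sq (by omega) (by linarith [log_nonneg (by linarith : (1 : ℝ) ≤ n)])
  have hsmall (i : Fin k) (hi : p i ≤ p (o₁ k hk) / 2) :
      winPr k h p i ≤ 2 * ((n : ℝ) ^ 2)⁻¹ := by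
    linarith [winPr_le_two_mul_exp (h := h) hp hs hi]
  refine div_three_le_winPr_of_forall_le_half hp hs (fun i => hsorted _ i (Nat.zero_le _))
    (by positivity) hsmall ?_
  calc (k : ℝ) * (2 * ((n : ℝ) ^ 2)⁻¹) ≤ n * (2 * ((n : ℝ) ^ 2)⁻¹) := by gcongr
    _ = 2 / n := by field_simp
    _ ≤ 1 / 3 := by rw [div_le_div_iff₀ (by linarith) (by norm_num)]; linarith
end
end
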